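/- arXiv:2409.06394 — 4 statements merged into one kernel-verified Lean document; each statement's English description precedes it below -/
import Mathlib

section
/- The function f(x) = x·(x − 1 − log x)² satisfies 0 < f(x) < 1 for every x in the open interval (0,1). In fact f(x) ≤ 8/9 for all x ∈ (0,1). -/
/-!
Since `x - 1 < 0`, the positive quantity `x - 1 - log x` is at most `-log x`, so
`f x ≤ x (log x)² = (-√x log x)²`. The tangent line to `log` through the origin,
`log t ≤ t / e`, applied at `t = 1/√x` gives `-√x log x ≤ 2/e`, hence `f x ≤ 4/e² < 8/9`.
-/

namespace Real

lemma log_le_div_exp_one {t : ℝ} (ht : 0 < t) : log t ≤ t / exp 1 := by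
  have h := log_le_sub_one_of_pos (div_pos ht (exp_pos 1))
  rw [log_div ht.ne' (exp_pos 1).ne', log_exp] at h
  linarith

lemma neg_sqrt_mul_log_le {x : ℝ} (hx : 0 < x) : -(√x * log x) ≤ 2 / exp 1 := by
  have hs : 0 < √x := sqrt_pos.2 hx
  have h := log_le_div_exp_one (inv_pos.2 hs)
  rw [log_inv, log_sqrt hx.le] at h
  calc -(√x * log x) = 2 * √x * -(log x / 2) := by ring
    _ ≤ 2 * √x * ((√x)⁻¹ / exp 1) := by gcongr
    _ = 2 / exp 1 := by field_simp

lemma mul_log_sq_le {x : ℝ} (hx₀ : 0 < x) (hx₁ : x ≤ 1) : x * log x ^ 2 ≤ 4 / exp 1 ^ 2 := by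
  have hlog : 0 ≤ -(√x * log x) :=
    neg_nonneg.2 (mul_nonpos_of_nonneg_of_nonpos (sqrt_nonneg x) (log_nonpos hx₀.le hx₁))
  calc x * log x ^ 2 = (-(√x * log x)) ^ 2 := by rw [neg_sq, mul_pow, sq_sqrt hx₀.le]
    _ ≤ (2 / exp 1) ^ 2 := pow_le_pow_left₀ hlog (neg_sqrt_mul_log_le hx₀) 2
    _ = 4 / exp 1 ^ 2 := by ring

lemma four_div_exp_one_sq_lt : 4 / exp 1 ^ 2 < 8 / 9 := by
  have he := exp_one_gt_d9
  rw [div_lt_div_iff₀ (by positivity) (by norm_num)]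
  nlinarith

end Real

/-- The function `f x = x * (x - 1 - log x)^2` satisfies `0 < f x < 1`,
and in fact `f x ≤ 8/9`, for every `x ∈ (0,1)`. -/
theorem stmt_0 (x : ℝ) (hx : x ∈ Set.Ioo (0:ℝ) 1) :
    0 < x * (x - 1 - Real.log x)^2 ∧
    x * (x - 1 - Real.log x)^2 ≤ 8/9 ∧
    x * (x - 1 - Real.log x)^2 < 1 := by
  obtain ⟨hx₀, hx₁⟩ := hx
  have hpos : 0 < x - 1 - Real.log x := by linarith [Real.log_lt_sub_one_of_pos hx₀ hx₁.ne]
  have hle : x * (x - 1 - Real.log x) ^ 2 ≤ x * Real.log x ^ 2 := by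
    rw [← neg_sq (Real.log x)]
    gcongr
    linarith
  have hbound : x * (x - 1 - Real.log x) ^ 2 ≤ 8 / 9 :=
    (hle.trans (Real.mul_log_sq_le hx₀ hx₁.le)).trans Real.four_div_exp_one_sq_lt.le
  exact ⟨by positivity, hbound, hbound.trans_lt (by norm_num)⟩
end

section
/- For integers h ≥ 2 and real p ∈ (0,1) with h·p < 1, one has p·h·(h·(1−p)/(h−1))^{h−1} < 1. -/
open Real

/-- Since `t ≤ exp (t - 1)` with equality only at `t = 1`, the product is bounded by
`exp ((x - 1) + n * (y - 1)) = exp 0`, strictly because `x ≠ 1`. -/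
theorem mul_pow_lt_one_of_add_mul_eq {x y : ℝ} {n : ℕ} (hx : 0 ≤ x) (hy : 0 ≤ y) (hx1 : x ≠ 1)
    (hsum : x + n * y = n + 1) : x * y ^ n < 1 := by
  have hxe : x < exp (x - 1) := by linarith [add_one_lt_exp (sub_ne_zero.2 hx1)]
  have hye : y ≤ exp (y - 1) := by linarith [add_one_le_exp (y - 1)]
  calc x * y ^ n ≤ x * exp (y - 1) ^ n := by gcongr
    _ < exp (x - 1) * exp (y - 1) ^ n := by gcongr
    _ = exp (x - 1 + n * (y - 1)) := by rw [← exp_nat_mul, ← exp_add]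
    _ = 1 := by rw [show x - 1 + n * (y - 1) = 0 by linarith, exp_zero]

/-- For integers `h ≥ 2` and real `p ∈ (0,1)` with `h * p < 1`, one has
`p * h * (h * (1 - p) / (h - 1)) ^ (h - 1) < 1`. -/
theorem stmt_3 (h : ℕ) (hh : 2 ≤ h) (p : ℝ) (hp0 : 0 < p) (hp1 : p < 1)
    (hhp : (h : ℝ) * p < 1) :
    p * h * ((h * (1 - p) / ((h : ℝ) - 1)) ^ (h - 1)) < 1 := by
  have hh1 : (1 : ℝ) < h := by exact_mod_cast hh
  have hcast : ((h - 1 : ℕ) : ℝ) = h - 1 := by rw [Nat.cast_sub (by omega), Nat.cast_one]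
  have hden : (h : ℝ) - 1 ≠ 0 := by linarith
  rw [mul_comm p]
  refine mul_pow_lt_one_of_add_mul_eq (by positivity)
    (div_nonneg (mul_nonneg (by positivity) (by linarith)) (by linarith)) hhp.ne ?_
  rw [hcast, mul_div_cancel₀ _ hden]
  ring
end

section
/- For every ν > 0 and every integer m ≥ 2, the series ∑_{k=1}^{∞} e^{−νk} k^{m−1} equals ν^{−m}(m−1)! + R_m where the remainder satisfies |R_m| ≤ 1/(π(m−1)) + 2(m−1)!/π^m. -/
/-!
Poisson summation for `f x = x ^ (m - 1) * exp (-ν x)` on `x > 0`, extended by `0`; `f` is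
continuous because `m ≥ 2`. The integer samples of `f` give the series, and
`𝓕 f ξ = (m - 1)! / (ν + 2πiξ) ^ m`. The term `ξ = 0` is the main term `(m - 1)! / ν ^ m`; for
`k ≠ 0` we have `‖𝓕 f k‖ ≤ (m - 1)! / (2π) ^ m / k ^ 2`, and `∑_{k ≠ 0} 1 / k ^ 2 = π ^ 2 / 3`
bounds the remainder by `2 (m - 1)! / π ^ m`.
-/

open Real MeasureTheory Set Filter Asymptotics FourierTransform
open scoped Nat

lemma norm_ofReal_pow_mul_cexp_neg_mul (z : ℂ) (n : ℕ) {t : ℝ} (ht : 0 ≤ t) :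
    ‖(t : ℂ) ^ n * Complex.exp (-(z * t))‖ = t ^ n * rexp (-(z.re * t)) := by
  simp [Complex.norm_exp, abs_of_nonneg ht]

section

variable {z : ℂ}

lemma integrableOn_ofReal_pow_mul_cexp_neg_mul_Ioi (hz : 0 < z.re) (n : ℕ) :
    IntegrableOn (fun t : ℝ => (t : ℂ) ^ n * Complex.exp (-(z * t))) (Ioi 0) := by
  refine Integrable.mono' (integrableOn_rpow_mul_exp_neg_mul_rpow (p := 1) (s := n)
    (by linarith [n.cast_nonneg (α := ℝ)]) one_pos hz) (by fun_prop) ?_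
  filter_upwards [ae_restrict_mem measurableSet_Ioi] with t ht
  rw [norm_ofReal_pow_mul_cexp_neg_mul z n ht.le, rpow_natCast, rpow_one, neg_mul]

lemma tendsto_ofReal_pow_mul_cexp_neg_mul_atTop (hz : 0 < z.re) (n : ℕ) :
    Tendsto (fun t : ℝ => (t : ℂ) ^ n * Complex.exp (-(z * t))) atTop (nhds 0) := by
  rw [tendsto_zero_iff_norm_tendsto_zero]
  refine (tendsto_rpow_mul_exp_neg_mul_atTop_nhds_zero n z.re hz).congr' ?_
  filter_upwards [eventually_ge_atTop 0] with t ht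
  rw [norm_ofReal_pow_mul_cexp_neg_mul z n ht, rpow_natCast, neg_mul]

lemma integral_cexp_neg_mul_Ioi (hz : 0 < z.re) :
    ∫ t in Ioi (0 : ℝ), Complex.exp (-(z * t)) = 1 / z := by
  have h := integral_exp_mul_complex_Ioi (a := -z) (by simpa using hz) 0
  simp only [neg_mul, Complex.ofReal_zero, mul_zero, Complex.exp_zero, div_neg, neg_div,
    neg_neg] at h
  exact h

/-- `tⁿ⁺¹ e^{-zt}` vanishes at `0` and at `∞`, so its derivative integrates to `0`. -/
lemma mul_integral_ofReal_pow_succ_mul_cexp_neg_mul_Ioi (hz : 0 < z.re) (n : ℕ) :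
    z * ∫ t in Ioi (0 : ℝ), (t : ℂ) ^ (n + 1) * Complex.exp (-(z * t)) =
      (n + 1) * ∫ t in Ioi (0 : ℝ), (t : ℂ) ^ n * Complex.exp (-(z * t)) := by
  have hderiv (t : ℝ) : HasDerivAt (fun s : ℝ => (s : ℂ) ^ (n + 1) * Complex.exp (-(z * s)))
      ((n + 1) * ((t : ℂ) ^ n * Complex.exp (-(z * t))) -
        z * ((t : ℂ) ^ (n + 1) * Complex.exp (-(z * t)))) t := by
    have hpow : HasDerivAt (fun s : ℝ => (s : ℂ) ^ (n + 1)) ((n + 1) * (t : ℂ) ^ n) t := by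
      simpa using (hasDerivAt_pow (n + 1) (t : ℂ)).comp_ofReal
    have hexp :
        HasDerivAt (fun s : ℝ => Complex.exp (-(z * s))) (-z * Complex.exp (-(z * t))) t := by
      simpa [mul_comm] using (((hasDerivAt_id (t : ℂ)).const_mul z).neg.cexp).comp_ofReal
    exact (hpow.mul hexp).congr_deriv (by ring)
  have hint := integrableOn_ofReal_pow_mul_cexp_neg_mul_Ioi hz
  have hftc := integral_Ioi_of_hasDerivAt_of_tendsto' (fun t _ => hderiv t)
    (((hint n).const_mul _).sub ((hint (n + 1)).const_mul _))
    (tendsto_ofReal_pow_mul_cexp_neg_mul_atTop hz (n + 1))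
  rw [integral_sub ((hint n).const_mul _) ((hint (n + 1)).const_mul _), integral_const_mul,
    integral_const_mul] at hftc
  simp only [Complex.ofReal_zero, ne_eq, Nat.add_eq_zero_iff, one_ne_zero, and_false,
    not_false_eq_true, zero_pow, zero_mul, sub_zero] at hftc
  exact (sub_eq_zero.mp hftc).symm

lemma integral_ofReal_pow_mul_cexp_neg_mul_Ioi (hz : 0 < z.re) (n : ℕ) :
    ∫ t in Ioi (0 : ℝ), (t : ℂ) ^ n * Complex.exp (-(z * t)) = n ! / z ^ (n + 1) := by
  have hz0 : z ≠ 0 := by rintro rfl; simp at hz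
  induction n with
  | zero => simpa using integral_cexp_neg_mul_Ioi hz
  | succ n ih =>
    have h := mul_integral_ofReal_pow_succ_mul_cexp_neg_mul_Ioi hz n
    rw [ih] at h
    rw [eq_div_iff_mul_eq (pow_ne_zero _ hz0), pow_succ, mul_comm (z ^ (n + 1)) z, ← mul_assoc,
      mul_comm _ z, h]
    push_cast [Nat.factorial_succ]
    field_simp

noncomputable def oneSidedPowExp (z : ℂ) (n : ℕ) : ℝ → ℂ :=
  (Ioi 0).indicator fun x => (x : ℂ) ^ n * Complex.exp (-(z * x))

lemma oneSidedPowExp_of_pos {n : ℕ} {x : ℝ} (hx : 0 < x) :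
    oneSidedPowExp z n x = (x : ℂ) ^ n * Complex.exp (-(z * x)) :=
  indicator_of_mem hx _

lemma continuous_oneSidedPowExp {n : ℕ} (hn : n ≠ 0) : Continuous (oneSidedPowExp z n) :=
  continuous_indicator (by simp [hn]) (by fun_prop)

lemma oneSidedPowExp_isBigO_abs_rpow_neg_two (hz : 0 < z.re) (n : ℕ) :
    oneSidedPowExp z n =O[cocompact ℝ] fun x => |x| ^ (-2 : ℝ) := by
  rw [cocompact_eq_atBot_atTop, isBigO_sup]
  constructor
  · refine (isBigO_zero _ _).congr' ?_ EventuallyEq.rfl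
    filter_upwards [eventually_le_atBot 0] with x hx
    simp [oneSidedPowExp, not_lt.mpr hx]
  · have hdecay := ((tendsto_rpow_mul_exp_neg_mul_atTop_nhds_zero (n + 2) z.re hz).isBigO_one ℝ).mul
      (isBigO_refl (fun x : ℝ => |x| ^ (-2 : ℝ)) atTop)
    simp only [one_mul] at hdecay
    refine (IsBigO.of_bound 1 ?_).trans hdecay
    filter_upwards [eventually_gt_atTop 0] with x hx
    have hpow : x ^ ((n : ℝ) + 2) * rexp (-z.re * x) * |x| ^ (-2 : ℝ) =
        x ^ n * rexp (-(z.re * x)) := by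
      rw [abs_of_pos hx, mul_right_comm, ← rpow_add hx, add_neg_cancel_right, rpow_natCast,
        neg_mul]
    rw [oneSidedPowExp_of_pos hx, norm_ofReal_pow_mul_cexp_neg_mul z n hx.le,
      hpow, one_mul, norm_of_nonneg (by positivity)]

lemma fourier_oneSidedPowExp (hz : 0 < z.re) (n : ℕ) (ξ : ℝ) :
    𝓕 (oneSidedPowExp z n) ξ = n ! / (z + 2 * π * ξ * Complex.I) ^ (n + 1) := by
  rw [Real.fourier_real_eq_integral_exp_smul, oneSidedPowExp]
  have hind : (fun v : ℝ => Complex.exp (↑(-2 * π * v * ξ) * Complex.I) •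
      (Ioi 0).indicator (fun x : ℝ => (x : ℂ) ^ n * Complex.exp (-(z * x))) v) =
      (Ioi 0).indicator fun v : ℝ => Complex.exp (↑(-2 * π * v * ξ) * Complex.I) •
        ((v : ℂ) ^ n * Complex.exp (-(z * v))) :=
    funext fun v => by by_cases hv : v ∈ Ioi 0 <;> simp [hv]
  rw [hind, integral_indicator measurableSet_Ioi,
    ← integral_ofReal_pow_mul_cexp_neg_mul_Ioi (by simpa using hz)]
  refine setIntegral_congr_fun measurableSet_Ioi fun x _ => ?_
  rw [smul_eq_mul, mul_left_comm, ← Complex.exp_add]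
  push_cast
  ring_nf

end

/-- The `k = 0` term is `1 / 0 = 0`. -/
lemma hasSum_int_one_div_sq : HasSum (fun k : ℤ => 1 / (k : ℝ) ^ 2) (π ^ 2 / 3) := by
  have hpos : HasSum (fun k : ℕ => 1 / ((k : ℝ) + 1) ^ 2) (π ^ 2 / 6) := by
    simpa using (hasSum_nat_add_iff' 1).mpr hasSum_zeta_two
  have h := HasSum.of_add_one_of_neg_add_one (f := fun k : ℤ => 1 / (k : ℝ) ^ 2)
    (by simpa using hpos) (by convert hpos using 2 with k; push_cast; ring)
  convert h using 1
  norm_num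
  ring

section

variable {ν : ℝ} {n : ℕ}

lemma norm_fourier_oneSidedPowExp_le (hν : 0 < ν) {ξ : ℝ} (hξ : ξ ≠ 0) :
    ‖𝓕 (oneSidedPowExp ν n) ξ‖ ≤ n ! / (2 * π * |ξ|) ^ (n + 1) := by
  have him : 2 * π * |ξ| ≤ ‖(ν : ℂ) + 2 * π * ξ * Complex.I‖ := by
    refine le_trans (le_of_eq ?_) (Complex.abs_im_le_norm _)
    simp [abs_mul, abs_of_pos pi_pos]
  rw [fourier_oneSidedPowExp (by simpa using hν), norm_div, norm_pow, Complex.norm_natCast]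
  gcongr

lemma norm_fourier_oneSidedPowExp_int_le (hν : 0 < ν) (hn : n ≠ 0) {k : ℤ}
    (hk : k ≠ 0) : ‖𝓕 (oneSidedPowExp ν n) k‖ ≤ n ! / (2 * π) ^ (n + 1) * (1 / (k : ℝ) ^ 2) := by
  have hk1 : 1 ≤ |(k : ℝ)| := by exact_mod_cast Int.one_le_abs hk
  calc ‖𝓕 (oneSidedPowExp ν n) k‖ ≤ n ! / (2 * π * |(k : ℝ)|) ^ (n + 1) :=
        norm_fourier_oneSidedPowExp_le hν (by exact_mod_cast hk)
    _ ≤ n ! / ((2 * π) ^ (n + 1) * |(k : ℝ)| ^ 2) := by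
        rw [mul_pow]
        gcongr
        omega
    _ = n ! / (2 * π) ^ (n + 1) * (1 / (k : ℝ) ^ 2) := by rw [sq_abs]; ring

lemma summable_fourier_oneSidedPowExp_int (hν : 0 < ν) (hn : n ≠ 0) :
    Summable fun k : ℤ => 𝓕 (oneSidedPowExp ν n) k :=
  (hasSum_int_one_div_sq.summable.mul_left _).of_norm_bounded_eventually <| by
    filter_upwards [eventually_cofinite_ne 0] with k hk
    exact norm_fourier_oneSidedPowExp_int_le hν hn hk

lemma norm_tsum_fourier_oneSidedPowExp_int_ne_zero_le (hν : 0 < ν) (hn : n ≠ 0) :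
    ‖∑' k : ℤ, if k = 0 then 0 else 𝓕 (oneSidedPowExp ν n) k‖ ≤
      n ! / (2 * π) ^ (n + 1) * (π ^ 2 / 3) := by
  refine tsum_of_norm_bounded (hasSum_int_one_div_sq.mul_left _) fun k => ?_
  split_ifs with hk
  · simp [hk]
  · exact norm_fourier_oneSidedPowExp_int_le hν hn hk

lemma tsum_oneSidedPowExp_eq_tsum_fourier (hν : 0 < ν) (hn : n ≠ 0) :
    ∑' k : ℕ, oneSidedPowExp ν n (k + 1) = ∑' k : ℤ, 𝓕 (oneSidedPowExp ν n) k := by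
  have hpoisson := Real.tsum_eq_tsum_fourier_of_rpow_decay_of_summable
    (continuous_oneSidedPowExp hn) one_lt_two
    (oneSidedPowExp_isBigO_abs_rpow_neg_two (by simpa using hν) n)
    (summable_fourier_oneSidedPowExp_int hν hn) 0
  simp only [zero_add, QuotientAddGroup.mk_zero, fourier_eval_zero, mul_one] at hpoisson
  rw [← hpoisson]
  have hsupp :
      Function.support (fun k : ℤ => oneSidedPowExp ν n k) ⊆ range fun k : ℕ => (k + 1 : ℤ) := by
    intro k hk
    have hk0 : 0 < k := by
      by_contra! h
      exact hk (indicator_of_notMem (by simpa using h) _)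
    exact ⟨(k - 1).toNat, by dsimp only; omega⟩
  have hinj : Function.Injective fun k : ℕ => (k + 1 : ℤ) := fun a b h => by simpa using h
  rw [← hinj.tsum_eq hsupp]
  push_cast
  rfl

end

lemma factorial_div_two_pi_pow_mul_pi_sq_div_three_le {n : ℕ} (hn : n ≠ 0) :
    n ! / (2 * π) ^ (n + 1) * (π ^ 2 / 3) ≤ 2 * n ! / π ^ (n + 1) := by
  have h4 : (4 : ℝ) ≤ 2 ^ (n + 1) := by
    calc (4 : ℝ) = 2 ^ 2 := by norm_num
      _ ≤ 2 ^ (n + 1) := pow_le_pow_right₀ one_le_two (by omega)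
  calc n ! / (2 * π) ^ (n + 1) * (π ^ 2 / 3)
        = n ! / π ^ (n + 1) * (π ^ 2 / (3 * 2 ^ (n + 1))) := by rw [mul_pow]; field_simp
    _ ≤ n ! / π ^ (n + 1) * 2 := by
        gcongr
        rw [div_le_iff₀ (by positivity)]
        nlinarith [pi_le_four, pi_pos]
    _ = 2 * n ! / π ^ (n + 1) := by ring

/-- For every `ν > 0` and integer `m ≥ 2`, `∑_{k=1}^∞ e^{-νk} k^{m-1} = ν^{-m} (m-1)! + R_m`
where `|R_m| ≤ 1/(π(m-1)) + 2(m-1)!/π^m`. -/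
theorem stmt_8 (ν : ℝ) (hν : 0 < ν) (m : ℕ) (hm : 2 ≤ m) :
    ∃ R : ℝ,
      (∑' k : ℕ, Real.exp (-ν * (k + 1)) * ((k : ℝ) + 1) ^ (m - 1))
        = (Nat.factorial (m - 1) : ℝ) / ν ^ m + R ∧
      |R| ≤ 1 / (π * (m - 1 : ℝ)) + 2 * (Nat.factorial (m - 1) : ℝ) / π ^ m := by
  obtain ⟨n, rfl⟩ : ∃ n, m = n + 1 := ⟨m - 1, by omega⟩
  have hn : n ≠ 0 := by omega
  simp only [Nat.add_sub_cancel]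
  set F := 𝓕 (oneSidedPowExp ν n)
  have hF0 : F 0 = ((n ! / ν ^ (n + 1) : ℝ) : ℂ) := by
    simp [F, fourier_oneSidedPowExp (z := ν) (by simpa using hν)]
  have hpoisson : ((∑' k : ℕ, rexp (-ν * (k + 1)) * ((k : ℝ) + 1) ^ n : ℝ) : ℂ) =
      F 0 + ∑' k : ℤ, if k = 0 then 0 else F k := by
    rw [← Int.cast_zero, ← (summable_fourier_oneSidedPowExp_int hν hn).tsum_eq_add_tsum_ite 0,
      ← tsum_oneSidedPowExp_eq_tsum_fourier hν hn, Complex.ofReal_tsum]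
    refine tsum_congr fun k => ?_
    rw [oneSidedPowExp_of_pos (by positivity)]
    push_cast
    ring_nf
  refine ⟨_, (add_sub_cancel _ _).symm, ?_⟩
  have hR : |∑' k : ℕ, rexp (-ν * (k + 1)) * ((k : ℝ) + 1) ^ n - n ! / ν ^ (n + 1)| =
      ‖∑' k : ℤ, if k = 0 then 0 else F k‖ := by
    rw [← Real.norm_eq_abs, ← Complex.norm_real, Complex.ofReal_sub, hpoisson, hF0,
      add_sub_cancel_left]
  calc _ = _ := hR
    _ ≤ n ! / (2 * π) ^ (n + 1) * (π ^ 2 / 3) :=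
        norm_tsum_fourier_oneSidedPowExp_int_ne_zero_le hν hn
    _ ≤ 2 * n ! / π ^ (n + 1) := factorial_div_two_pi_pow_mul_pi_sq_div_three_le hn
    _ ≤ _ := le_add_of_nonneg_left (by rw [Nat.cast_add_one, add_sub_cancel_right]; positivity)
end

section
/- For all integers k ≥ 2 and h ≥ 2, the binomial coefficient C(kh, k−1) satisfies C(kh, k−1) ≤ (e^{1/600}/(h−1)) · (1/√(2π(k−1))) · √(1 + 1/(h−1)) · (h^h/(h−1)^{h−1})^k. -/
/-!
Write `k = r + 1`, `h = g + 1` and `m = k g + 1`, so that `k h = r + m`. Stirling's lower bound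
for `r!` and `m!` together with Robbins' upper bound `n! ≤ √(2πn) (n/e)ⁿ e^{1/(12n)}` give
`C(r + m, r) ≤ e^{1/(12n)} √(n / (2π r m)) nⁿ / (rʳ mᵐ)`.
Since `(kh)^{kh} = kᵏ (kg)^{kg} (hʰ/gᵍ)ᵏ`, the entropy term is
`(hʰ/gᵍ)ᵏ (kᵏ/rʳ) ((m-1)^{m-1}/mᵐ) ≤ (hʰ/gᵍ)ᵏ · e k · e^{-(m-1)/m} / m`,
and what remains in front is controlled by `eᵗ (m - 1) ≤ m` for `t ≤ 1/m`.
-/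

open Real Filter Topology Nat

namespace Stirling

theorem monotone_log_stirlingSeq_succ_sub :
    Monotone fun n : ℕ ↦ log (stirlingSeq (n + 1)) - 1 / (12 * ((n : ℝ) + 1)) := by
  refine monotone_nat_of_le_succ fun n ↦ ?_
  have hstep := log_stirlingSeq_sdiff_le (n + 1)
  have htel : 1 / (12 * ((n : ℝ) + 1)) - 1 / (12 * ((n : ℝ) + 1 + 1))
      = 1 / (12 * ((n + 1 : ℕ) : ℝ) * ((n + 1 : ℕ) + 1)) := by
    push_cast; field_simp; ring
  push_cast at hstep htel ⊢
  linarith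

theorem stirlingSeq_le_sqrt_pi_mul_exp {n : ℕ} (hn : n ≠ 0) :
    stirlingSeq n ≤ √π * exp (1 / (12 * n)) := by
  obtain ⟨n, rfl⟩ := Nat.exists_eq_succ_of_ne_zero hn
  have hcorr : Tendsto (fun n : ℕ ↦ 1 / (12 * ((n : ℝ) + 1))) atTop (𝓝 0) := by
    have h := (tendsto_one_div_add_atTop_nhds_zero_nat (𝕜 := ℝ)).div_const 12
    rw [zero_div] at h
    exact h.congr fun n ↦ by field_simp
  have hlim := ((tendsto_stirlingSeq_sqrt_pi.comp (tendsto_add_atTop_nat 1)).log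
    (by positivity)).sub hcorr
  have hle := monotone_log_stirlingSeq_succ_sub.ge_of_tendsto hlim n
  rw [sub_zero, sub_le_iff_le_add, log_le_iff_le_exp (stirlingSeq'_pos n), exp_add,
    exp_log (by positivity)] at hle
  simpa using hle

theorem factorial_le_stirling_mul_exp {n : ℕ} (hn : n ≠ 0) :
    (n ! : ℝ) ≤ √(2 * π * n) * (n / exp 1) ^ n * exp (1 / (12 * n)) := by
  have h := stirlingSeq_le_sqrt_pi_mul_exp hn
  rw [stirlingSeq, div_le_iff₀ (by positivity)] at h
  calc (n ! : ℝ) ≤ _ := h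
    _ = _ := by rw [show 2 * π * n = π * (2 * n) by ring, sqrt_mul pi_pos.le]; ring

end Stirling

open Stirling

theorem exp_mul_sub_one_le {m t : ℝ} (hm : 0 < m) (ht : t ≤ m⁻¹) :
    exp t * (m - 1) ≤ m := by
  have h : m - 1 ≤ m * exp (-t) := by
    have := add_one_le_exp (-t)
    have : t * m ≤ 1 := by simpa [hm.ne'] using mul_le_mul_of_nonneg_right ht hm.le
    nlinarith
  calc exp t * (m - 1) ≤ exp t * (m * exp (-t)) := by gcongr
    _ = m := by rw [mul_left_comm, ← exp_add, add_neg_cancel, exp_zero, mul_one]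

theorem pow_succ_div_pow_le (r : ℕ) : ((r : ℝ) + 1) ^ (r + 1) / r ^ r ≤ exp 1 * (r + 1) := by
  rcases eq_or_ne r 0 with rfl | hr
  · simp
  calc ((r : ℝ) + 1) ^ (r + 1) / r ^ r = (1 + (r : ℝ)⁻¹) ^ r * (r + 1) := by
        rw [show 1 + (r : ℝ)⁻¹ = (r + 1) / r by field_simp, div_pow]
        field_simp
        ring
    _ ≤ exp 1 * (r + 1) := by gcongr; exact one_add_inv_pow_le_exp

theorem pow_div_pow_succ_le (M : ℕ) :
    (M : ℝ) ^ M / (M + 1) ^ (M + 1) ≤ exp (-(M / (M + 1))) / (M + 1) := by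
  calc (M : ℝ) ^ M / (M + 1) ^ (M + 1) = (1 - (M / (M + 1)) / M) ^ M / (M + 1) := by
        rcases eq_or_ne M 0 with rfl | hM
        · simp
        rw [show 1 - ((M : ℝ) / (M + 1)) / M = M / (M + 1) by field_simp; ring, div_pow]
        field_simp
        ring
    _ ≤ exp (-(M / (M + 1))) / (M + 1) := by
        gcongr
        exact one_sub_div_pow_le_exp_neg (by rw [div_le_iff₀ (by positivity)]; nlinarith)

theorem mul_add_one_pow_eq (k g : ℕ) :
    ((k : ℝ) * (g + 1)) ^ (k * (g + 1))
      = k ^ k * ((k : ℝ) * g) ^ (k * g) * (((g : ℝ) + 1) ^ (g + 1) / g ^ g) ^ k := by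
  rcases eq_or_ne g 0 with rfl | hg
  · simp
  rw [mul_pow, mul_pow, div_pow, ← pow_mul, ← pow_mul]
  field_simp
  ring

theorem add_choose_le_stirling {r m : ℕ} (hr : r ≠ 0) (hm : m ≠ 0) :
    ((r + m).choose r : ℝ) ≤ exp (1 / (12 * ((r : ℝ) + m))) * √((r + m) / (2 * π * r * m))
      * (((r : ℝ) + m) ^ (r + m) / (r ^ r * m ^ m)) := by
  rw [Nat.cast_add_choose]
  calc ((r + m)! : ℝ) / (r ! * m !)
      ≤ √(2 * π * (r + m : ℕ)) * ((r + m : ℕ) / exp 1) ^ (r + m)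
          * exp (1 / (12 * (r + m : ℕ)))
        / (√(2 * π * r) * (r / exp 1) ^ r * (√(2 * π * m) * (m / exp 1) ^ m)) := by
        gcongr
        · exact factorial_le_stirling_mul_exp (by omega)
        · exact le_factorial_stirling r
        · exact le_factorial_stirling m
    _ = _ := by
        have hsqrt : √((r + m) / (2 * π * r * m))
            = √(2 * π * (r + m)) / (√(2 * π * r) * √(2 * π * m)) := by
          rw [← sqrt_mul (by positivity), ← sqrt_div (by positivity)]
          congr 1
          field_simp
        rw [hsqrt]
        push_cast
        simp only [div_pow, pow_add (exp 1)]
        field_simp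

theorem add_pow_div_pow_mul_pow_le {r g m : ℕ} (hm : m = (r + 1) * g + 1) :
    ((r : ℝ) + m) ^ (r + m) / (r ^ r * m ^ m)
      ≤ (((g : ℝ) + 1) ^ (g + 1) / g ^ g) ^ (r + 1) * ((r + 1) * exp (m : ℝ)⁻¹ / m) := by
  set M := (r + 1) * g with hM
  have hsum : (r : ℝ) + m = ((r + 1 : ℕ) : ℝ) * (g + 1) := by rw [hm, hM]; push_cast; ring
  have hexponent : r + m = (r + 1) * (g + 1) := by rw [hm]; ring
  have hMcast : (M : ℝ) = ((r + 1 : ℕ) : ℝ) * g := by push_cast [hM]; ring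
  rw [hsum, hexponent, mul_add_one_pow_eq, ← hMcast, ← hM, hm]
  push_cast
  set B := (((g : ℝ) + 1) ^ (g + 1) / g ^ g) ^ (r + 1)
  calc ((r : ℝ) + 1) ^ (r + 1) * (M : ℝ) ^ M * B / (r ^ r * ((M : ℝ) + 1) ^ (M + 1))
      = B * (((r : ℝ) + 1) ^ (r + 1) / r ^ r) * ((M : ℝ) ^ M / (M + 1) ^ (M + 1)) := by
        field_simp
    _ ≤ B * (exp 1 * (r + 1)) * (exp (-(M / (M + 1))) / (M + 1)) := by
        gcongr B * ?_ * ?_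
        · exact pow_succ_div_pow_le r
        · exact pow_div_pow_succ_le M
    _ = B * ((r + 1) * exp ((M : ℝ) + 1)⁻¹ / (M + 1)) := by
        rw [show ((M : ℝ) + 1)⁻¹ = 1 + -(M / (M + 1)) by field_simp; ring, exp_add]
        ring

theorem stirling_prefactor_le {r g m : ℝ} (hr : 0 < r) (hg : 0 < g)
    (hm : m = (r + 1) * g + 1) :
    exp (1 / (12 * (r + m))) * √((r + m) / (2 * π * r * m)) * ((r + 1) * exp m⁻¹ / m)
      ≤ exp (1 / 600) / g * (1 / √(2 * π * r)) * √(1 + 1 / g) := by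
  have hmpos : 0 < m := by rw [hm]; positivity
  have hm_one : 0 < m - 1 := by rw [hm, add_sub_cancel_right]; positivity
  have hexp_inv : exp m⁻¹ * (m - 1) ≤ m := exp_mul_sub_one_le hmpos le_rfl
  have hexp_sq : exp (1 / (12 * (r + m))) ^ 2 * (m - 1) ≤ m := by
    rw [← exp_nat_mul]
    refine exp_mul_sub_one_le hmpos ?_
    rw [show ((2 : ℕ) : ℝ) * (1 / (12 * (r + m))) = (6 * (r + m))⁻¹ by field_simp; norm_num]
    exact inv_anti₀ hmpos (by linarith)
  have hsqrt : exp (1 / (12 * (r + m))) * √((r + m) / m) ≤ √(1 + 1 / g) := by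
    rw [← sqrt_sq (exp_pos _).le, ← sqrt_mul (by positivity)]
    gcongr
    rw [show 1 + 1 / g = (r + m) / (m - 1) by rw [hm]; field_simp; ring, mul_div_assoc',
      div_le_div_iff₀ hmpos hm_one]
    nlinarith
  have hfactor : (r + 1) * exp m⁻¹ / m ≤ 1 / g := by
    rw [div_le_div_iff₀ hmpos hg]
    nlinarith
  calc exp (1 / (12 * (r + m))) * √((r + m) / (2 * π * r * m)) * ((r + 1) * exp m⁻¹ / m)
      = 1 / √(2 * π * r) * (exp (1 / (12 * (r + m))) * √((r + m) / m))
          * ((r + 1) * exp m⁻¹ / m) := by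
        rw [show (r + m) / (2 * π * r * m) = (r + m) / m / (2 * π * r) by field_simp,
          sqrt_div' _ (by positivity)]
        ring
    _ ≤ 1 / √(2 * π * r) * √(1 + 1 / g) * (1 / g) := by gcongr
    _ ≤ exp (1 / 600) / g * (1 / √(2 * π * r)) * √(1 + 1 / g) := by
        have : 1 ≤ exp (1 / 600) := one_le_exp (by norm_num)
        rw [div_eq_mul_one_div (exp _)]
        nlinarith [show 0 ≤ 1 / √(2 * π * r) * √(1 + 1 / g) * (1 / g) by positivity]

/-- For integers `k ≥ 2`, `h ≥ 2`, the binomial coefficient `C(kh, k-1)` satisfies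
`C(kh, k-1) ≤ (e^{1/600}/(h-1)) (1/√(2π(k-1))) √(1 + 1/(h-1)) (h^h/(h-1)^{h-1})^k`. -/
theorem stmt_12 (k h : ℕ) (hk : 2 ≤ k) (hh : 2 ≤ h) :
    (Nat.choose (k * h) (k - 1) : ℝ)
      ≤ (Real.exp (1 / 600) / ((h : ℝ) - 1)) * (1 / Real.sqrt (2 * π * ((k : ℝ) - 1)))
          * Real.sqrt (1 + 1 / ((h : ℝ) - 1))
          * ((h : ℝ) ^ h / ((h : ℝ) - 1) ^ (h - 1)) ^ k := by
  obtain ⟨r, rfl⟩ : ∃ r, k = r + 1 := ⟨k - 1, by omega⟩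
  obtain ⟨g, rfl⟩ : ∃ g, h = g + 1 := ⟨h - 1, by omega⟩
  set m := (r + 1) * g + 1 with hm
  have hsplit : (r + 1) * (g + 1) = r + m := by ring
  rw [Nat.add_sub_cancel, Nat.add_sub_cancel, hsplit]
  push_cast
  simp only [add_sub_cancel_right]
  have hr : (0 : ℝ) < r := by norm_cast; omega
  have hg : (0 : ℝ) < g := by norm_cast; omega
  have hm_cast : (m : ℝ) = (r + 1) * g + 1 := by rw [hm]; push_cast; ring
  calc ((r + m).choose r : ℝ)
      ≤ exp (1 / (12 * ((r : ℝ) + m))) * √((r + m) / (2 * π * r * m))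
          * (((r : ℝ) + m) ^ (r + m) / (r ^ r * m ^ m)) :=
        add_choose_le_stirling (by omega) (by omega)
    _ ≤ exp (1 / (12 * ((r : ℝ) + m))) * √((r + m) / (2 * π * r * m))
          * ((((g : ℝ) + 1) ^ (g + 1) / g ^ g) ^ (r + 1)
            * ((r + 1) * exp (m : ℝ)⁻¹ / m)) := by
        gcongr
        exact add_pow_div_pow_mul_pow_le hm
    _ = exp (1 / (12 * ((r : ℝ) + m))) * √((r + m) / (2 * π * r * m))
          * ((r + 1) * exp (m : ℝ)⁻¹ / m) * (((g : ℝ) + 1) ^ (g + 1) / g ^ g) ^ (r + 1) := by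
        ring
    _ ≤ _ := mul_le_mul_of_nonneg_right (stirling_prefactor_le hr hg hm_cast) (by positivity)
end
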